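/- Let G be a connected F-free finite simple graph that is not a clique, and suppose V(G) admits no partition into three sets U, C1, C2 such that every vertex of U is adjacent to all other vertices of G, C1 and C2 both induce cliques, and there is no edge between C1 and C2. Then every maximal strong module M of G that is adjacent in the quotient graph Q̃(G) to more than two other maximal strong modules consists of a single vertex of G. -/

import Mathlib

open SimpleGraph

/-- `M` is a module of `G`: every vertex outside `M` is adjacent to all
vertices of `M` or to none of them. -/
def IsModule {V : Type*} (G : SimpleGraph V) (M : Set V) : Prop :=
  ∀ x ∉ M, (∀ a ∈ M, G.Adj x a) ∨ (∀ a ∈ M, ¬ G.Adj x a)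

/-- A module is strong if it overlaps no other module. -/
def IsStrongModule {V : Type*} (G : SimpleGraph V) (M : Set V) : Prop :=
  IsModule G M ∧
    ∀ M' : Set V, IsModule G M' → (M ∩ M').Nonempty → M ⊆ M' ∨ M' ⊆ M

/-- A nonempty strong module ≠ V(G) whose only proper strong superset is V(G). -/
def IsMaximalStrongModule {V : Type*} (G : SimpleGraph V) (M : Set V) : Prop :=
  IsStrongModule G M ∧ M.Nonempty ∧ M ≠ Set.univ ∧
    ∀ M' : Set V, IsStrongModule G M' → M ⊂ M' → M' = Set.univ

/-- Quotient graph defined by a family `P` of vertex sets: two members are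
adjacent iff they are distinct and completely adjacent in `G`. -/
def QuotientOn {V : Type*} (G : SimpleGraph V) (P : Set (Set V)) : SimpleGraph P where
  Adj A B := A ≠ B ∧ ∀ a ∈ (A : Set V), ∀ b ∈ (B : Set V), G.Adj a b
  symm := by
    constructor
    intro A B h
    exact ⟨Ne.symm h.1, fun b hb a ha => (h.2 a ha b hb).symm⟩
  loopless := by
    constructor
    intro A h
    exact h.1 rfl

/-- The quotient graph Q̃(G), on the maximal strong modules of `G`. -/
def QuotientGraph {V : Type*} (G : SimpleGraph V) :
    SimpleGraph {M : Set V | IsMaximalStrongModule G M} :=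
  QuotientOn G {M : Set V | IsMaximalStrongModule G M}

/-- A graph is prime if it has at least four vertices and all its modules are
trivial (empty, singletons, or the whole vertex set). -/
def IsPrimeGraph {W : Type*} (H : SimpleGraph W) : Prop :=
  4 ≤ Nat.card W ∧
    ∀ M : Set W, IsModule H M → M = ∅ ∨ M = Set.univ ∨ ∃ w, M = {w}

/-- `G` contains an induced copy of `H`. -/
def HasInducedCopy {W V : Type*} (H : SimpleGraph W) (G : SimpleGraph V) : Prop :=
  ∃ f : W ↪ V, ∀ a b : W, G.Adj (f a) (f b) ↔ H.Adj a b

/-- The path on four vertices. -/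
def GraphP4 : SimpleGraph (Fin 4) :=
  SimpleGraph.fromRel fun a b =>
    (a, b) ∈ ([(0, 1), (1, 2), (2, 3)] : List (Fin 4 × Fin 4))

/-- The cycle on four vertices. -/
def GraphC4 : SimpleGraph (Fin 4) :=
  SimpleGraph.fromRel fun a b =>
    (a, b) ∈ ([(0, 1), (1, 2), (2, 3), (0, 3)] : List (Fin 4 × Fin 4))

/-- The bull: triangle 0,1,2 with pendant 3 at 0 and pendant 4 at 2. -/
def GraphBull : SimpleGraph (Fin 5) :=
  SimpleGraph.fromRel fun a b =>
    (a, b) ∈ ([(0, 1), (0, 2), (1, 2), (0, 3), (2, 4)] : List (Fin 5 × Fin 5))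

/-- The dart: triangle 0,1,2; vertex 4 adjacent exactly to 0 and 2;
vertex 3 adjacent exactly to 0. -/
def GraphDart : SimpleGraph (Fin 5) :=
  SimpleGraph.fromRel fun a b =>
    (a, b) ∈ ([(0, 1), (0, 2), (1, 2), (0, 4), (2, 4), (0, 3)] : List (Fin 5 × Fin 5))

/-- The fox: adjacent vertices 0,1 and pairwise nonadjacent 2,3,4, each
adjacent to both 0 and 1 (K5 minus a triangle). -/
def GraphFox : SimpleGraph (Fin 5) :=
  SimpleGraph.fromRel fun a b =>
    (a, b) ∈ ([(0, 1), (0, 2), (0, 3), (0, 4), (1, 2), (1, 3), (1, 4)] : List (Fin 5 × Fin 5))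

/-- The gem: induced path 0-1-2-3 plus vertex 4 adjacent to all of them. -/
def GraphGem : SimpleGraph (Fin 5) :=
  SimpleGraph.fromRel fun a b =>
    (a, b) ∈ ([(0, 1), (1, 2), (2, 3), (0, 4), (1, 4), (2, 4), (3, 4)] : List (Fin 5 × Fin 5))

/-- `G` has no induced subgraph isomorphic to a member of
F = {C4, bull, dart, fox, gem}. -/
def FFree {V : Type*} (G : SimpleGraph V) : Prop :=
  ¬ HasInducedCopy GraphC4 G ∧ ¬ HasInducedCopy GraphBull G ∧
  ¬ HasInducedCopy GraphDart G ∧ ¬ HasInducedCopy GraphFox G ∧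
  ¬ HasInducedCopy GraphGem G

/-- `X` is an association set of `G`: the graph `G - X` has no induced `P₃`,
i.e., every component of `G - X` is a clique. -/
def IsAssociationSet {V : Type*} (G : SimpleGraph V) (X : Set V) : Prop :=
  ∀ a b c : V, a ∉ X → b ∉ X → c ∉ X →
    G.Adj a b → G.Adj b c → a ≠ c → G.Adj a c

/-- `X` is a dissociation set of `G`: the graph `G - X` has no `P₃` subgraph,
i.e., every component of `G - X` has at most two vertices. -/
def IsDissociationSet {V : Type*} (G : SimpleGraph V) (X : Set V) : Prop :=
  ∀ a b c : V, a ∉ X → b ∉ X → c ∉ X → G.Adj a b → G.Adj b c → a = c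

/-- Minimum cardinality of an association set of `G`. -/
noncomputable def optAsso {V : Type*} (G : SimpleGraph V) : ℕ :=
  sInf {n : ℕ | ∃ X : Set V, IsAssociationSet G X ∧ X.ncard = n}

/-- Minimum cardinality of a dissociation set of `G`. -/
noncomputable def optDiss {V : Type*} (G : SimpleGraph V) : ℕ :=
  sInf {n : ℕ | ∃ X : Set V, IsDissociationSet G X ∧ X.ncard = n}

/-!
Let `M` be a maximal strong module containing `a ≠ b`, with three quotient neighbours `M₁, M₂, M₃`
and `xᵢ ∈ Mᵢ`.

If `M` is not a clique, the vertices complete to `M` form a clique (no `C4`) with no neighbour among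
the vertices anticomplete to `M` (no fox, no dart); by connectivity every vertex outside `M` is
universal, in particular `x₁` and `x₂`. In the presence of two universal vertices, adjacency is
transitive on the non-universal vertices and has at most two classes there (no `C4`, gem or fox):
this is the excluded partition.

If `M` is a clique, it has a non-universal vertex, as otherwise `{a} ∪ Mᶜ` would overlap `M`; the
co-component of that vertex is a strong module properly containing `M`, so `Gᶜ` is connected. Then
every module properly containing `M` is `V(G)`. Two adjacent quotient neighbours `M₁, M₂` of `M` are
impossible: a vertex separating `M₁` from `M₂`, together with a triangle `a, x, y` through the three
modules, forces `{a, x}` or `{a, y}` to be a module (no `C4`, bull, dart or gem), hence `M ∪ M₁` or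
`M ∪ M₂` is one. So the `xᵢ` are pairwise nonadjacent, and `a, b, x₁, x₂, x₃` induce a fox.
-/

instance : DecidableRel GraphC4.Adj := fun _ _ => decidable_of_iff _ (fromRel_adj _ _ _).symm
instance : DecidableRel GraphBull.Adj := fun _ _ => decidable_of_iff _ (fromRel_adj _ _ _).symm
instance : DecidableRel GraphDart.Adj := fun _ _ => decidable_of_iff _ (fromRel_adj _ _ _).symm
instance : DecidableRel GraphFox.Adj := fun _ _ => decidable_of_iff _ (fromRel_adj _ _ _).symm
instance : DecidableRel GraphGem.Adj := fun _ _ => decidable_of_iff _ (fromRel_adj _ _ _).symm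

section InducedCopies

variable {V : Type*} {G : SimpleGraph V}

lemma hasInducedCopy_of_adj_iff {n : ℕ} {H : SimpleGraph (Fin n)} (f : Fin n → V)
    (hf : ∀ i j, i < j → (G.Adj (f i) (f j) ↔ H.Adj i j))
    (htwin : ∀ i j, i < j → (∀ k, H.Adj i k ↔ H.Adj j k) → f i ≠ f j) :
    HasInducedCopy H G := by
  have hadj : ∀ i j, G.Adj (f i) (f j) ↔ H.Adj i j := by
    intro i j
    rcases lt_trichotomy i j with hij | rfl | hij
    · exact hf i j hij
    · simp
    · rw [G.adj_comm, H.adj_comm]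
      exact hf j i hij
  refine ⟨⟨f, fun i j hfij => ?_⟩, hadj⟩
  by_contra hij
  wlog hlt : i < j generalizing i j
  · exact this j i hfij.symm (Ne.symm hij) (lt_of_le_of_ne (not_lt.mp hlt) (Ne.symm hij))
  exact htwin i j hlt (fun k => by rw [← hadj, ← hadj, hfij]) hfij

lemma hasInducedCopy_graphC4 {p₀ p₁ p₂ p₃ : V}
    (h₀₁ : G.Adj p₀ p₁) (h₁₂ : G.Adj p₁ p₂) (h₂₃ : G.Adj p₂ p₃) (h₀₃ : G.Adj p₀ p₃)
    (n₀₂ : ¬ G.Adj p₀ p₂) (n₁₃ : ¬ G.Adj p₁ p₃) (e₀₂ : p₀ ≠ p₂) (e₁₃ : p₁ ≠ p₃) :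
    HasInducedCopy GraphC4 G := by
  refine hasInducedCopy_of_adj_iff ![p₀, p₁, p₂, p₃] (fun i j hij => ?_)
    (fun i j hij htw => ?_) <;> fin_cases i <;> fin_cases j <;>
    first
    | exact absurd hij (by decide)
    | exact absurd htw (by decide)
    | exact iff_of_true ‹_› (by decide)
    | exact iff_of_false ‹_› (by decide)
    | assumption

lemma hasInducedCopy_graphBull {p₀ p₁ p₂ p₃ p₄ : V}
    (h₀₁ : G.Adj p₀ p₁) (h₀₂ : G.Adj p₀ p₂) (h₁₂ : G.Adj p₁ p₂) (h₀₃ : G.Adj p₀ p₃)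
    (h₂₄ : G.Adj p₂ p₄) (n₀₄ : ¬ G.Adj p₀ p₄) (n₁₃ : ¬ G.Adj p₁ p₃) (n₁₄ : ¬ G.Adj p₁ p₄)
    (n₂₃ : ¬ G.Adj p₂ p₃) (n₃₄ : ¬ G.Adj p₃ p₄) :
    HasInducedCopy GraphBull G := by
  refine hasInducedCopy_of_adj_iff ![p₀, p₁, p₂, p₃, p₄] (fun i j hij => ?_)
    (fun i j hij htw => ?_) <;> fin_cases i <;> fin_cases j <;>
    first
    | exact absurd hij (by decide)
    | exact absurd htw (by decide)
    | exact iff_of_true ‹_› (by decide)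
    | exact iff_of_false ‹_› (by decide)

lemma hasInducedCopy_graphDart {p₀ p₁ p₂ p₃ p₄ : V}
    (h₀₁ : G.Adj p₀ p₁) (h₀₂ : G.Adj p₀ p₂) (h₁₂ : G.Adj p₁ p₂) (h₀₃ : G.Adj p₀ p₃)
    (h₀₄ : G.Adj p₀ p₄) (h₂₄ : G.Adj p₂ p₄) (n₁₃ : ¬ G.Adj p₁ p₃) (n₁₄ : ¬ G.Adj p₁ p₄)
    (n₂₃ : ¬ G.Adj p₂ p₃) (n₃₄ : ¬ G.Adj p₃ p₄) (e₁₄ : p₁ ≠ p₄) :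
    HasInducedCopy GraphDart G := by
  refine hasInducedCopy_of_adj_iff ![p₀, p₁, p₂, p₃, p₄] (fun i j hij => ?_)
    (fun i j hij htw => ?_) <;> fin_cases i <;> fin_cases j <;>
    first
    | exact absurd hij (by decide)
    | exact absurd htw (by decide)
    | exact iff_of_true ‹_› (by decide)
    | exact iff_of_false ‹_› (by decide)
    | assumption

lemma hasInducedCopy_graphFox {p₀ p₁ p₂ p₃ p₄ : V}
    (h₀₁ : G.Adj p₀ p₁) (h₀₂ : G.Adj p₀ p₂) (h₀₃ : G.Adj p₀ p₃) (h₀₄ : G.Adj p₀ p₄)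
    (h₁₂ : G.Adj p₁ p₂) (h₁₃ : G.Adj p₁ p₃) (h₁₄ : G.Adj p₁ p₄)
    (n₂₃ : ¬ G.Adj p₂ p₃) (n₂₄ : ¬ G.Adj p₂ p₄) (n₃₄ : ¬ G.Adj p₃ p₄)
    (e₂₃ : p₂ ≠ p₃) (e₂₄ : p₂ ≠ p₄) (e₃₄ : p₃ ≠ p₄) :
    HasInducedCopy GraphFox G := by
  refine hasInducedCopy_of_adj_iff ![p₀, p₁, p₂, p₃, p₄] (fun i j hij => ?_)
    (fun i j hij htw => ?_) <;> fin_cases i <;> fin_cases j <;>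
    first
    | exact absurd hij (by decide)
    | exact absurd htw (by decide)
    | exact iff_of_true ‹_› (by decide)
    | exact iff_of_false ‹_› (by decide)
    | assumption

lemma hasInducedCopy_graphGem {p₀ p₁ p₂ p₃ p₄ : V}
    (h₀₁ : G.Adj p₀ p₁) (h₁₂ : G.Adj p₁ p₂) (h₂₃ : G.Adj p₂ p₃) (h₀₄ : G.Adj p₀ p₄)
    (h₁₄ : G.Adj p₁ p₄) (h₂₄ : G.Adj p₂ p₄) (h₃₄ : G.Adj p₃ p₄)
    (n₀₂ : ¬ G.Adj p₀ p₂) (n₀₃ : ¬ G.Adj p₀ p₃) (n₁₃ : ¬ G.Adj p₁ p₃) :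
    HasInducedCopy GraphGem G := by
  refine hasInducedCopy_of_adj_iff ![p₀, p₁, p₂, p₃, p₄] (fun i j hij => ?_)
    (fun i j hij htw => ?_) <;> fin_cases i <;> fin_cases j <;>
    first
    | exact absurd hij (by decide)
    | exact absurd htw (by decide)
    | exact iff_of_true ‹_› (by decide)
    | exact iff_of_false ‹_› (by decide)

end InducedCopies

section Modules

variable {V : Type*} {G : SimpleGraph V} {A B M : Set V}

lemma IsModule.adj_iff (hA : IsModule G A) {v a b : V} (hv : v ∉ A) (ha : a ∈ A) (hb : b ∈ A) :
    G.Adj v a ↔ G.Adj v b := by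
  rcases hA v hv with h | h
  · exact iff_of_true (h a ha) (h b hb)
  · exact iff_of_false (h a ha) (h b hb)

lemma isModule_pair_iff {a b : V} :
    IsModule G {a, b} ↔ ∀ v, v ≠ a → v ≠ b → (G.Adj v a ↔ G.Adj v b) := by
  simp only [IsModule, Set.mem_insert_iff, Set.mem_singleton_iff, forall_eq_or_imp, forall_eq]
  refine forall_congr' fun v => ?_
  tauto

lemma IsModule.union (hA : IsModule G A) (hB : IsModule G B) (hAB : (A ∩ B).Nonempty) :
    IsModule G (A ∪ B) := by
  obtain ⟨c, hcA, hcB⟩ := hAB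
  intro v hv
  rw [Set.mem_union, not_or] at hv
  rcases hA v hv.1 with h | h
  · exact Or.inl fun w hw => hw.elim (h w) fun hw => (hB.adj_iff hv.2 hcB hw).1 (h c hcA)
  · exact Or.inr fun w hw => hw.elim (h w) fun hw => mt (hB.adj_iff hv.2 hcB hw).2 (h c hcA)

lemma IsModule.diff (hA : IsModule G A) (hB : IsModule G B) (hBA : (B \ A).Nonempty) :
    IsModule G (A \ B) := by
  obtain ⟨t, htB, htA⟩ := hBA
  intro v hv
  by_cases hvA : v ∈ A
  · have hvB : v ∈ B := by
      by_contra h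
      exact hv ⟨hvA, h⟩
    -- `v` and `t` lie in `B`, so they see each `w ∈ A \ B` alike, and `t` sees all of `A` alike
    have key : ∀ w ∈ A \ B, G.Adj v w ↔ G.Adj t v := fun w hw => by
      rw [G.adj_comm, hB.adj_iff hw.2 hvB htB, G.adj_comm, hA.adj_iff htA hw.1 hvA]
    by_cases htv : G.Adj t v
    · exact Or.inl fun w hw => (key w hw).2 htv
    · exact Or.inr fun w hw => mt (key w hw).1 htv
  · rcases hA v hvA with h | h
    · exact Or.inl fun w hw => h w hw.1
    · exact Or.inr fun w hw => h w hw.1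

lemma IsModule.union_of_isModule_pair (hA : IsModule G A) (hB : IsModule G B) {a b : V}
    (ha : a ∈ A) (hb : b ∈ B) (hab : IsModule G {a, b}) : IsModule G (A ∪ B) := by
  have h := (hA.union hab ⟨a, ha, by simp⟩).union hB ⟨b, Or.inr (by simp), hb⟩
  have hAB : A ∪ {a, b} ∪ B = A ∪ B := by
    ext v
    simp only [Set.mem_union, Set.mem_insert_iff, Set.mem_singleton_iff]
    constructor
    · rintro ((hv | rfl | rfl) | hv) <;> tauto
    · tauto
  rwa [hAB] at h

lemma IsModule.adj_iff_adj (hA : IsModule G A) (hB : IsModule G B) (hAB : Disjoint A B)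
    {a a' b b' : V} (ha : a ∈ A) (ha' : a' ∈ A) (hb : b ∈ B) (hb' : b' ∈ B) :
    G.Adj a b ↔ G.Adj a' b' := by
  rw [hB.adj_iff (hAB.notMem_of_mem_left ha) hb hb', G.adj_comm,
    hA.adj_iff (hAB.notMem_of_mem_right hb') ha ha', G.adj_comm]

lemma IsModule.isCompleteBetween_of_adj (hA : IsModule G A) (hB : IsModule G B)
    (hAB : Disjoint A B) {a b : V} (ha : a ∈ A) (hb : b ∈ B) (hab : G.Adj a b) :
    G.IsCompleteBetween A B := fun _ ha' _ hb' => (hA.adj_iff_adj hB hAB ha ha' hb hb').1 hab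

lemma IsMaximalStrongModule.eq_of_mem {M' : Set V} (hM : IsMaximalStrongModule G M)
    (hM' : IsMaximalStrongModule G M') {v : V} (hv : v ∈ M) (hv' : v ∈ M') : M = M' := by
  by_contra hne
  rcases hM.1.2 M' hM'.1.1 ⟨v, hv, hv'⟩ with h | h
  · exact hM'.2.2.1 (hM.2.2.2 M' hM'.1 (h.ssubset_of_ne hne))
  · exact hM.2.2.1 (hM'.2.2.2 M hM.1 (h.ssubset_of_ne (Ne.symm hne)))

lemma IsMaximalStrongModule.disjoint {M' : Set V} (hM : IsMaximalStrongModule G M)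
    (hM' : IsMaximalStrongModule G M') (hne : M ≠ M') : Disjoint M M' :=
  Set.disjoint_left.2 fun _ hv hv' => hne (hM.eq_of_mem hM' hv hv')

/-- Otherwise `{a} ∪ Mᶜ` is a module overlapping `M`. -/
lemma IsStrongModule.not_isUniversal (hM : IsStrongModule G M) (hMu : M ≠ Set.univ)
    {a b : V} (ha : a ∈ M) (hb : b ∈ M) (hab : a ≠ b) : ¬ G.IsUniversal a := by
  intro hau
  have hW : IsModule G (insert a Mᶜ) := by
    intro v hv
    simp only [Set.mem_insert_iff, Set.mem_compl_iff, not_or, not_not] at hv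
    refine Or.inl fun w hw => ?_
    rcases hw with rfl | hw
    · exact (hau (Ne.symm hv.1)).symm
    · have haw : G.Adj a w := hau fun h => hw (h ▸ ha)
      exact ((hM.1.adj_iff hw ha hv.2).1 haw.symm).symm
  rcases hM.2 _ hW ⟨a, ha, Set.mem_insert a _⟩ with h | h
  · rcases h hb with h | h
    · exact hab h.symm
    · exact h hb
  · exact hMu (Set.eq_univ_of_forall fun v => by_contra fun hv => hv (h (Or.inr hv)))

end Modules

section Connectivity

variable {V : Type*} {G H : SimpleGraph V} {M W : Set V}

lemma mem_of_reachable_of_adj_closed {P : Set V} (hP : ∀ ⦃v w⦄, v ∈ P → H.Adj v w → w ∈ P)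
    {a v : V} (ha : a ∈ P) (hav : H.Reachable a v) : v ∈ P := by
  obtain ⟨p⟩ := hav
  by_contra hv
  obtain ⟨d, -, hd, hd'⟩ := p.exists_boundary_dart P ha hv
  exact hd' (hP hd d.adj)

/-- The edges between `M` and `Mᶜ` are all present or all absent, disconnecting `Gᶜ` or `G`. -/
lemma not_isModule_compl (hG : G.Connected) (hGc : Gᶜ.Connected) (hM : IsModule G M)
    (hMc : IsModule G Mᶜ) {a b : V} (ha : a ∈ M) (hb : b ∉ M) : False := by
  have hcross : ∀ p ∈ M, ∀ q ∉ M, G.Adj p q ↔ G.Adj a b := fun p hp q hq =>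
    hM.adj_iff_adj hMc disjoint_compl_right hp ha hq hb
  by_cases hab : G.Adj a b
  · refine hb (mem_of_reachable_of_adj_closed (H := Gᶜ) (fun v w hv hvw => ?_) ha
      (hGc.preconnected a b))
    by_contra hw
    exact hvw.2 ((hcross v hv w hw).2 hab)
  · refine hb (mem_of_reachable_of_adj_closed (H := G) (fun v w hv hvw => ?_) ha
      (hG.preconnected a b))
    by_contra hw
    exact hab ((hcross v hv w hw).1 hvw)

lemma isStrongModule_coComponent (a : V) : IsStrongModule G {v | Gᶜ.Reachable a v} := by
  set C := {v | Gᶜ.Reachable a v}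
  have hC : ∀ ⦃c v⦄, c ∈ C → v ∉ C → G.Adj v c := fun c v hc hv => by
    by_contra h
    exact hv (Reachable.trans hc (Adj.reachable ⟨fun hcv => hv (hcv ▸ hc), fun h' => h h'.symm⟩))
  refine ⟨fun v hv => Or.inl fun c hc => hC hc hv, fun Z hZ ⟨c₀, hc₀C, hc₀Z⟩ => ?_⟩
  by_cases hZC : Z ⊆ C
  · exact Or.inr hZC
  obtain ⟨z, hzZ, hzC⟩ := Set.not_subset.1 hZC
  -- a co-neighbour of `Z ∩ C` outside `Z` would miss `z` as well, putting `z` into `C`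
  have hclosed : ∀ ⦃p q⦄, p ∈ C ∩ Z → Gᶜ.Adj p q → q ∈ C ∩ Z := by
    intro p q hp hpq
    have hqC : q ∈ C := hp.1.trans hpq.reachable
    refine ⟨hqC, by_contra fun hqZ => hzC ?_⟩
    have hqz : ¬ G.Adj q z := by
      rw [hZ.adj_iff hqZ hzZ hp.2]
      exact fun h => hpq.2 h.symm
    exact hqC.trans (Adj.reachable ⟨fun h => hqZ (h ▸ hzZ), hqz⟩)
  exact Or.inl fun c hc =>
    (mem_of_reachable_of_adj_closed hclosed ⟨hc₀C, hc₀Z⟩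
      ((hc₀C : Gᶜ.Reachable a c₀).symm.trans hc)).2

lemma IsMaximalStrongModule.compl_connected_of_isClique (hM : IsMaximalStrongModule G M)
    (hcl : G.IsClique M) {a : V} (ha : a ∈ M) (hau : ¬ G.IsUniversal a) : Gᶜ.Connected := by
  obtain ⟨d, had, hnad⟩ : ∃ d, a ≠ d ∧ ¬ G.Adj a d := by
    simpa [SimpleGraph.IsUniversal] using hau
  have hdC : d ∈ {v | Gᶜ.Reachable a v} := Adj.reachable ⟨had, hnad⟩
  have hdM : d ∉ M := fun hd => hnad (hcl ha hd had)
  have hC := isStrongModule_coComponent (G := G) a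
  rcases hM.1.2 _ hC.1 ⟨a, ha, Reachable.refl a⟩ with h | h
  · have hCu := hM.2.2.2 _ hC (h.ssubset_of_ne fun hMC => hdM (hMC ▸ hdC))
    exact (connected_iff_exists_forall_reachable _).2 ⟨a, Set.eq_univ_iff_forall.1 hCu⟩
  · exact absurd (h hdC) hdM

variable [Finite V]

/-- A maximal module `W' ≠ V(G)` properly containing `M` is not strong; a module `Z` overlapping it
gives `W' ∪ Z = V(G)`, so that `W'ᶜ = Z \ W'` is a module as well. -/
lemma IsMaximalStrongModule.eq_univ_of_ssubset (hG : G.Connected) (hGc : Gᶜ.Connected)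
    (hM : IsMaximalStrongModule G M) (hW : IsModule G W) (hMW : M ⊂ W) : W = Set.univ := by
  by_contra hWu
  obtain ⟨W', -, hW'⟩ := Finite.exists_le_maximal
    (p := fun W' => IsModule G W' ∧ M ⊂ W' ∧ W' ≠ Set.univ) ⟨hW, hMW, hWu⟩
  obtain ⟨⟨hW'mod, hMW', hW'u⟩, hmax⟩ := hW'
  have hnstrong : ¬ IsStrongModule G W' := fun h => hW'u (hM.2.2.2 W' h hMW')
  simp only [IsStrongModule, hW'mod, true_and, not_forall, not_or] at hnstrong
  obtain ⟨Z, hZ, hW'Z, hW'nZ, hZnW'⟩ := hnstrong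
  obtain ⟨w, hwW', hwZ⟩ := Set.not_subset.1 hW'nZ
  obtain ⟨z, hzZ, hzW'⟩ := Set.not_subset.1 hZnW'
  have hunion : W' ∪ Z = Set.univ := by
    by_contra hu
    have := hmax ⟨hW'mod.union hZ hW'Z, hMW'.trans_subset Set.subset_union_left, hu⟩
      Set.subset_union_left
    exact hzW' (this (Or.inr hzZ))
  have hcompl : Z \ W' = W'ᶜ := by
    rw [Set.sdiff_eq, Set.inter_eq_right.2]
    exact fun v hv => (hunion ▸ Set.mem_univ v : v ∈ W' ∪ Z).resolve_left hv
  exact not_isModule_compl hG hGc hW'mod (hcompl ▸ hZ.diff hW'mod ⟨w, hwW', hwZ⟩) hwW' hzW'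

lemma IsMaximalStrongModule.not_isModule_union (hG : G.Connected) (hGc : Gᶜ.Connected)
    (hM : IsMaximalStrongModule G M) {A : Set V} {x z : V} (hx : x ∈ A) (hxM : x ∉ M)
    (hz : z ∉ M ∪ A) : ¬ IsModule G (M ∪ A) := fun hMA =>
  hz (hM.eq_univ_of_ssubset hG hGc hMA
    ((Set.ssubset_iff_of_subset Set.subset_union_left).2 ⟨x, Or.inr hx, hxM⟩) ▸ Set.mem_univ z)

end Connectivity

section ForbiddenConfigurations

variable {V : Type*} {G : SimpleGraph V}

lemma FFree.isModule_pair_of_adj (hF : FFree G) {a x y u : V} (hax : G.Adj a x)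
    (hay : G.Adj a y) (hxy : G.Adj x y) (hua : G.Adj u a) (hux : G.Adj u x)
    (huy : ¬ G.Adj u y) (hu : u ≠ y) : IsModule G {a, x} := by
  rw [isModule_pair_iff]
  intro v hva hvx
  by_cases hva' : G.Adj v a <;> by_cases hvx' : G.Adj v x
  · exact iff_of_true hva' hvx'
  · exfalso
    by_cases hvy : G.Adj v y <;> by_cases huv : G.Adj u v
    · exact hF.1 (hasInducedCopy_graphC4 hux hxy hvy.symm huv huy (fun h => hvx' h.symm)
        hu (Ne.symm hvx))
    · exact hF.2.2.2.2 (hasInducedCopy_graphGem hvy hxy.symm hux.symm hva' hay.symm hax.symm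
        hua hvx' (fun h => huv h.symm) (fun h => huy h.symm))
    · exact hF.2.2.2.2 (hasInducedCopy_graphGem huv.symm hux hxy hva' hua hax.symm hay.symm
        hvx' hvy huy)
    · exact hF.2.2.1 (hasInducedCopy_graphDart hua.symm hax hux hva'.symm hay hxy huv huy
        (fun h => hvx' h.symm) hvy hu)
  · exfalso
    by_cases hvy : G.Adj v y <;> by_cases huv : G.Adj u v
    · exact hF.1 (hasInducedCopy_graphC4 huv hvy hay.symm hua huy hva' hu hva)
    · exact hF.2.2.2.2 (hasInducedCopy_graphGem hua hay hvy.symm hux hax hxy.symm hvx'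
        huy huv (fun h => hva' h.symm))
    · exact hF.2.2.2.2 (hasInducedCopy_graphGem hay.symm hua.symm huv hxy.symm hax hux hvx'
        (fun h => huy h.symm) (fun h => hvy h.symm) (fun h => hva' h.symm))
    · exact hF.2.2.1 (hasInducedCopy_graphDart hux.symm hax.symm hua hvx'.symm hxy hay huv huy
        (fun h => hva' h.symm) hvy hu)
  · exact iff_of_false hva' hvx'

lemma FFree.isModule_pair_of_not_adj (hF : FFree G) {a x y u : V} (hax : G.Adj a x)
    (hay : G.Adj a y) (hxy : G.Adj x y) (hua : ¬ G.Adj u a) (hux : G.Adj u x)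
    (huy : ¬ G.Adj u y) : IsModule G {a, y} := by
  rw [isModule_pair_iff]
  intro v hva hvy
  by_cases hva' : G.Adj v a <;> by_cases hvy' : G.Adj v y
  · exact iff_of_true hva' hvy'
  · exfalso
    by_cases hvx : G.Adj v x <;> by_cases huv : G.Adj u v
    · exact hF.2.2.2.2 (hasInducedCopy_graphGem hay.symm hva'.symm huv.symm hxy.symm hax hvx hux
        (fun h => hvy' h.symm) (fun h => huy h.symm) (fun h => hua h.symm))
    · exact hF.2.2.1 (hasInducedCopy_graphDart hvx.symm hax.symm hva' hux.symm hxy hay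
        (fun h => huv h.symm) hvy' (fun h => hua h.symm) huy hvy)
    · exact hF.1 (hasInducedCopy_graphC4 huv hva' hax hux hua hvx
        (fun h => huy (h ▸ hay)) (fun h => hvy' (h ▸ hxy)))
    · exact hF.2.1 (hasInducedCopy_graphBull hay hax hxy.symm hva'.symm hux.symm
        (fun h => hua h.symm) (fun h => hvy' h.symm) (fun h => huy h.symm)
        (fun h => hvx h.symm) (fun h => huv h.symm))
  · exfalso
    by_cases hvx : G.Adj v x <;> by_cases huv : G.Adj u v
    · exact hF.2.2.2.2 (hasInducedCopy_graphGem huv hvy' hay.symm hux hvx hxy.symm hax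
        huy hua hva')
    · exact hF.2.2.1 (hasInducedCopy_graphDart hvx.symm hxy hvy' hux.symm hax.symm hay.symm
        (fun h => huv h.symm) hva' (fun h => huy h.symm) hua hva)
    · exact hF.1 (hasInducedCopy_graphC4 hux hxy hvy'.symm huv huy (fun h => hvx h.symm)
        (fun h => hua (h ▸ hay.symm)) (fun h => hva' (h ▸ hax.symm)))
    · exact hF.2.1 (hasInducedCopy_graphBull hax.symm hxy hay hux.symm hvy'.symm
        (fun h => hvx h.symm) (fun h => hua h.symm) (fun h => hva' h.symm)
        (fun h => huy h.symm) huv)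
  · exact iff_of_false hva' hvy'

end ForbiddenConfigurations

section PrimeCase

variable {V : Type*} [Finite V] {G : SimpleGraph V} {M M₁ M₂ M₃ : Set V}

lemma FFree.false_of_separating_vertex (hF : FFree G) (hG : G.Connected) (hGc : Gᶜ.Connected)
    (hM : IsMaximalStrongModule G M) (hM₁ : IsModule G M₁) (hM₂ : IsModule G M₂)
    (h₀₁ : G.IsCompleteBetween M M₁) (h₀₂ : G.IsCompleteBetween M M₂)
    (h₁₂ : G.IsCompleteBetween M₁ M₂) {u x y : V} (hx : x ∈ M₁) (hy : y ∈ M₂) (hu : u ∉ M₂)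
    (hux : G.Adj u x) (huy : ¬ G.Adj u y) : False := by
  obtain ⟨a, ha⟩ := hM.2.1
  have hax := h₀₁ ha hx
  have hay := h₀₂ ha hy
  have hxy := h₁₂ hx hy
  have hxM : x ∉ M := h₀₁.disjoint.notMem_of_mem_right hx
  have hyM : y ∉ M := h₀₂.disjoint.notMem_of_mem_right hy
  by_cases hua : G.Adj u a
  · have hpair := hF.isModule_pair_of_adj hax hay hxy hua hux huy fun h => hu (h ▸ hy)
    refine hM.not_isModule_union hG hGc hx hxM (z := y) ?_
      (hM.1.1.union_of_isModule_pair hM₁ ha hx hpair)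
    exact fun h => h.elim hyM (h₁₂.disjoint.notMem_of_mem_right hy)
  · have hpair := hF.isModule_pair_of_not_adj hax hay hxy hua hux huy
    refine hM.not_isModule_union hG hGc hy hyM (z := x) ?_
      (hM.1.1.union_of_isModule_pair hM₂ ha hy hpair)
    exact fun h => h.elim hxM (h₁₂.disjoint.notMem_of_mem_left hx)

lemma FFree.not_isCompleteBetween (hF : FFree G) (hG : G.Connected) (hGc : Gᶜ.Connected)
    (hM : IsMaximalStrongModule G M) (hM₁ : IsMaximalStrongModule G M₁)
    (hM₂ : IsMaximalStrongModule G M₂) (h₀₁ : G.IsCompleteBetween M M₁)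
    (h₀₂ : G.IsCompleteBetween M M₂) : ¬ G.IsCompleteBetween M₁ M₂ := by
  intro h₁₂
  obtain ⟨a, ha⟩ := hM.2.1
  obtain ⟨x, hx⟩ := hM₁.2.1
  obtain ⟨y, hy⟩ := hM₂.2.1
  have hnot : ¬ IsModule G (M₁ ∪ M₂) := hM₁.not_isModule_union hG hGc hy
    (h₁₂.disjoint.notMem_of_mem_right hy)
    fun h => h.elim (h₀₁.disjoint.notMem_of_mem_left ha) (h₀₂.disjoint.notMem_of_mem_left ha)
  simp only [IsModule, not_forall, not_or, not_not] at hnot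
  obtain ⟨u, hu, ⟨c, hc, hnuc⟩, ⟨c', hc', huc'⟩⟩ := hnot
  rw [Set.mem_union, not_or] at hu
  rcases hM₁.1.1 u hu.1 with h₁ | h₁ <;> rcases hM₂.1.1 u hu.2 with h₂ | h₂
  · exact hnuc (hc.elim (h₁ c) (h₂ c))
  · exact hF.false_of_separating_vertex hG hGc hM hM₁.1.1 hM₂.1.1 h₀₁ h₀₂ h₁₂ hx hy hu.2
      (h₁ x hx) (h₂ y hy)
  · exact hF.false_of_separating_vertex hG hGc hM hM₂.1.1 hM₁.1.1 h₀₂ h₀₁ h₁₂.symm hy hx hu.1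
      (h₂ y hy) (h₁ x hx)
  · exact (hc'.elim (h₁ c') (h₂ c')) huc'

lemma FFree.false_of_isClique (hF : FFree G) (hG : G.Connected)
    (hM : IsMaximalStrongModule G M) (hcl : G.IsClique M) {a b : V} (ha : a ∈ M) (hb : b ∈ M)
    (hab : a ≠ b) (hM₁ : IsMaximalStrongModule G M₁) (hM₂ : IsMaximalStrongModule G M₂)
    (hM₃ : IsMaximalStrongModule G M₃) (h₁₂ : M₁ ≠ M₂) (h₁₃ : M₁ ≠ M₃) (h₂₃ : M₂ ≠ M₃)
    (h₁ : G.IsCompleteBetween M M₁) (h₂ : G.IsCompleteBetween M M₂)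
    (h₃ : G.IsCompleteBetween M M₃) : False := by
  have hGc := hM.compl_connected_of_isClique hcl ha (hM.1.not_isUniversal hM.2.2.1 ha hb hab)
  have hindep : ∀ {N N' : Set V} {x x' : V}, IsMaximalStrongModule G N →
      IsMaximalStrongModule G N' → N ≠ N' → G.IsCompleteBetween M N →
      G.IsCompleteBetween M N' → x ∈ N → x' ∈ N' → ¬ G.Adj x x' ∧ x ≠ x' :=
    fun hN hN' hNN' h h' hx hx' =>
      ⟨fun hxx' => hF.not_isCompleteBetween hG hGc hM hN hN' h h'
        (hN.1.1.isCompleteBetween_of_adj hN'.1.1 (hN.disjoint hN' hNN') hx hx' hxx'),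
      fun hxx' => (hN.disjoint hN' hNN').notMem_of_mem_left hx (hxx' ▸ hx')⟩
  obtain ⟨x₁, hx₁⟩ := hM₁.2.1
  obtain ⟨x₂, hx₂⟩ := hM₂.2.1
  obtain ⟨x₃, hx₃⟩ := hM₃.2.1
  obtain ⟨n₁₂, e₁₂⟩ := hindep hM₁ hM₂ h₁₂ h₁ h₂ hx₁ hx₂
  obtain ⟨n₁₃, e₁₃⟩ := hindep hM₁ hM₃ h₁₃ h₁ h₃ hx₁ hx₃
  obtain ⟨n₂₃, e₂₃⟩ := hindep hM₂ hM₃ h₂₃ h₂ h₃ hx₂ hx₃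
  exact hF.2.2.2.1 (hasInducedCopy_graphFox (hcl ha hb hab) (h₁ ha hx₁) (h₂ ha hx₂) (h₃ ha hx₃)
    (h₁ hb hx₁) (h₂ hb hx₂) (h₃ hb hx₃) n₁₂ n₁₃ n₂₃ e₁₂ e₁₃ e₂₃)

end PrimeCase

def SplitsIntoUniversalAndTwoCliques {V : Type*} (G : SimpleGraph V) : Prop :=
  ∃ U C1 C2 : Set V,
    Disjoint U C1 ∧ Disjoint U C2 ∧ Disjoint C1 C2 ∧ U ∪ C1 ∪ C2 = Set.univ ∧
    (∀ u ∈ U, ∀ v : V, v ≠ u → G.Adj u v) ∧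
    G.IsClique C1 ∧ G.IsClique C2 ∧ (∀ a ∈ C1, ∀ b ∈ C2, ¬ G.Adj a b)

section UniversalVertices

variable {V : Type*} {G : SimpleGraph V}

lemma SimpleGraph.IsUniversal.adj_of_not_isUniversal {x v : V} (hx : G.IsUniversal x)
    (hv : ¬ G.IsUniversal v) : G.Adj x v :=
  hx fun h => hv (h ▸ hx)

lemma FFree.isUniversal_of_notMem_of_not_isClique (hF : FFree G) (hG : G.Connected) {M : Set V}
    (hM : IsModule G M) {p q : V} (hp : p ∈ M) (hq : q ∈ M) (hpq : p ≠ q) (hnpq : ¬ G.Adj p q)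
    {x₁ x₂ : V} (hx : x₁ ≠ x₂) (hx₁ : ∀ m ∈ M, G.Adj m x₁) (hx₂ : ∀ m ∈ M, G.Adj m x₂) :
    ∀ u ∉ M, G.IsUniversal u := by
  have hN : ∀ n n', n ≠ n' → (∀ m ∈ M, G.Adj m n) → (∀ m ∈ M, G.Adj m n') → G.Adj n n' :=
    fun n n' hnn' hn hn' => by_contra fun h => hF.1 (hasInducedCopy_graphC4 (hn p hp)
      (hn q hq).symm (hn' q hq) (hn' p hp) hnpq h hpq hnn')
  have hx₁₂ := hN x₁ x₂ hx hx₁ hx₂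
  have hR : ∀ r ∉ M, (∀ m ∈ M, ¬ G.Adj r m) → ∀ n, (∀ m ∈ M, G.Adj m n) → ¬ G.Adj r n := by
    intro r hr hrM n hn hrn
    by_cases hall : ∀ n', (∀ m ∈ M, G.Adj m n') → G.Adj r n'
    · exact hF.2.2.2.1 (hasInducedCopy_graphFox hx₁₂ (hx₁ p hp).symm (hx₁ q hq).symm
        (hall x₁ hx₁).symm (hx₂ p hp).symm (hx₂ q hq).symm (hall x₂ hx₂).symm hnpq
        (fun h => hrM p hp h.symm) (fun h => hrM q hq h.symm) hpq
        (fun h => hr (h ▸ hp)) (fun h => hr (h ▸ hq)))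
    · push Not at hall
      obtain ⟨m, hm, hrm⟩ := hall
      exact hF.2.2.1 (hasInducedCopy_graphDart (hn p hp).symm
        (hN n m (fun h => hrm (h ▸ hrn)) hn hm) (hm p hp) hrn.symm (hn q hq).symm (hm q hq).symm
        (fun h => hrM p hp h.symm) hnpq (fun h => hrm h.symm) (hrM q hq) hpq)
  -- `M` and the vertices complete to it form a set closed under adjacency
  have hcomplete : ∀ u ∉ M, ∀ m ∈ M, G.Adj m u := by
    have hclosed : ∀ ⦃v w⦄, v ∈ {v | v ∈ M ∨ ∀ m ∈ M, G.Adj m v} → G.Adj v w →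
        w ∈ {v | v ∈ M ∨ ∀ m ∈ M, G.Adj m v} := by
      intro v w hv hvw
      by_contra hw
      simp only [Set.mem_ofPred_eq, not_or] at hw
      rcases hM w hw.1 with h | h
      · exact hw.2 fun m hm => (h m hm).symm
      · exact hv.elim (fun hv => h v hv hvw.symm) fun hv => hR w hw.1 h v hv hvw.symm
    exact fun u hu => (mem_of_reachable_of_adj_closed hclosed (Or.inl hp)
      (hG.preconnected p u)).resolve_left hu
  intro u hu v huv
  by_cases hv : v ∈ M
  · exact (hcomplete u hu v hv).symm
  · exact hN u v huv (hcomplete u hu) (hcomplete v hv)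

lemma FFree.adj_of_not_isUniversal (hF : FFree G) {x y : V} (hxy : x ≠ y)
    (hx : G.IsUniversal x) (hy : G.IsUniversal y) {p q r : V} (hp : ¬ G.IsUniversal p)
    (hq : ¬ G.IsUniversal q) (hr : ¬ G.IsUniversal r) (hpq : p ≠ q) (hpr : p ≠ r) (hqr : q ≠ r)
    (hnpq : ¬ G.Adj p q) (hnpr : ¬ G.Adj p r) : G.Adj q r := by
  by_contra hnqr
  exact hF.2.2.2.1 (hasInducedCopy_graphFox (hx hxy) (hx.adj_of_not_isUniversal hp)
    (hx.adj_of_not_isUniversal hq) (hx.adj_of_not_isUniversal hr) (hy.adj_of_not_isUniversal hp)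
    (hy.adj_of_not_isUniversal hq) (hy.adj_of_not_isUniversal hr) hnpq hnpr hnqr hpq hpr hqr)

lemma FFree.adj_trans_of_not_isUniversal (hF : FFree G) {x y : V} (hxy : x ≠ y)
    (hx : G.IsUniversal x) (hy : G.IsUniversal y) {p q r : V} (hp : ¬ G.IsUniversal p)
    (hq : ¬ G.IsUniversal q) (hr : ¬ G.IsUniversal r) (hpq : G.Adj p q) (hqr : G.Adj q r)
    (hpr : p ≠ r) : G.Adj p r := by
  have hxv : ∀ {v}, ¬ G.IsUniversal v → G.Adj v x := fun hv => (hx.adj_of_not_isUniversal hv).symm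
  obtain ⟨w, hqw, hnqw⟩ : ∃ w, q ≠ w ∧ ¬ G.Adj q w := by simpa [SimpleGraph.IsUniversal] using hq
  have hw : ¬ G.IsUniversal w := fun h => hnqw (h hqw.symm).symm
  have hwp : p ≠ w := fun h => hnqw (h ▸ hpq.symm)
  have hwr : r ≠ w := fun h => hnqw (h ▸ hqr)
  by_contra hnpr
  by_cases hpw : G.Adj p w <;> by_cases hrw : G.Adj r w
  · exact hF.1 (hasInducedCopy_graphC4 hpq hqr hrw hpw hnpr hnqw hpr hqw)
  · exact hF.2.2.2.2 (hasInducedCopy_graphGem hqr.symm hpq.symm hpw (hxv hr) (hxv hq) (hxv hp)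
      (hxv hw) (fun h => hnpr h.symm) hrw hnqw)
  · exact hF.2.2.2.2 (hasInducedCopy_graphGem hpq hqr hrw (hxv hp) (hxv hq) (hxv hr) (hxv hw)
      hnpr hpw hnqw)
  · exact hrw (hF.adj_of_not_isUniversal hxy hx hy hp hr hw hpr hwp hwr hnpr hpw)

/-- Adjacency is an equivalence relation with at most two classes on the non-universal
vertices. -/
lemma FFree.splitsIntoUniversalAndTwoCliques (hF : FFree G) {x y : V} (hxy : x ≠ y)
    (hx : G.IsUniversal x) (hy : G.IsUniversal y) :
    SplitsIntoUniversalAndTwoCliques G := by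
  by_cases hall : ∀ v, G.IsUniversal v
  · exact ⟨Set.univ, ∅, ∅, by simp, by simp, by simp, by simp, fun u _ v hvu => hall u hvu.symm,
      by simp, by simp, by simp⟩
  push Not at hall
  obtain ⟨t, ht⟩ := hall
  refine ⟨G.universalVerts, {v | ¬ G.IsUniversal v ∧ (v = t ∨ G.Adj v t)},
    {v | ¬ G.IsUniversal v ∧ ¬ (v = t ∨ G.Adj v t)}, Set.disjoint_left.2 fun v h h' => h'.1 h,
    Set.disjoint_left.2 fun v h h' => h'.1 h, Set.disjoint_left.2 fun v h h' => h'.2 h.2,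
    Set.eq_univ_of_forall fun v => ?_, fun u hu v hvu => hu hvu.symm, ?_, ?_, ?_⟩
  · by_cases hv : G.IsUniversal v
    · exact Or.inl (Or.inl hv)
    · by_cases hvt : v = t ∨ G.Adj v t
      · exact Or.inl (Or.inr ⟨hv, hvt⟩)
      · exact Or.inr ⟨hv, hvt⟩
  · rintro p ⟨hp, hpt⟩ q ⟨hq, hqt⟩ hpq
    rcases hpt with rfl | hpt <;> rcases hqt with rfl | hqt
    · exact absurd rfl hpq
    · exact hqt.symm
    · exact hpt
    · exact hF.adj_trans_of_not_isUniversal hxy hx hy hp ht hq hpt hqt.symm hpq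
  · rintro p ⟨hp, hpt⟩ q ⟨hq, hqt⟩ hpq
    rw [not_or] at hpt hqt
    exact hF.adj_of_not_isUniversal hxy hx hy ht hp hq (Ne.symm hpt.1) (Ne.symm hqt.1) hpq
      (fun h => hpt.2 h.symm) (fun h => hqt.2 h.symm)
  · rintro p ⟨hp, hpt⟩ q ⟨hq, hqt⟩ hpq
    rw [not_or] at hqt
    rcases hpt with rfl | hpt
    · exact hqt.2 hpq.symm
    · exact hqt.2 (hF.adj_trans_of_not_isUniversal hxy hx hy hq hp ht hpq.symm hpt hqt.1)

end UniversalVertices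

theorem stmt_5_general {V : Type*} [Fintype V] (G : SimpleGraph V) (hconn : G.Connected)
    (hF : FFree G)
    (hnp : ¬ ∃ U C1 C2 : Set V,
      Disjoint U C1 ∧ Disjoint U C2 ∧ Disjoint C1 C2 ∧ U ∪ C1 ∪ C2 = Set.univ ∧
      (∀ u ∈ U, ∀ v : V, v ≠ u → G.Adj u v) ∧
      G.IsClique C1 ∧ G.IsClique C2 ∧ (∀ a ∈ C1, ∀ b ∈ C2, ¬ G.Adj a b)) :
    ∀ M : Set V, IsMaximalStrongModule G M →
      2 < {M' : Set V | IsMaximalStrongModule G M' ∧ M' ≠ M ∧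
            ∀ a ∈ M, ∀ b ∈ M', G.Adj a b}.ncard →
      ∃ v : V, M = {v} := by
  intro M hM hdeg
  refine hM.2.1.exists_eq_singleton_or_nontrivial.resolve_right ?_
  rintro ⟨a, ha, b, hb, hab⟩
  obtain ⟨M₁, M₂, M₃, ⟨hM₁, -, h₁⟩, ⟨hM₂, -, h₂⟩, ⟨hM₃, -, h₃⟩, h₁₂, h₁₃, h₂₃⟩ :=
    (Set.two_lt_ncard_iff (Set.toFinite _)).1 hdeg
  by_cases hcl : G.IsClique M
  · exact hF.false_of_isClique hconn hM hcl ha hb hab hM₁ hM₂ hM₃ h₁₂ h₁₃ h₂₃ h₁ h₂ h₃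
  obtain ⟨p, hp, q, hq, hpq, hnpq⟩ : ∃ p ∈ M, ∃ q ∈ M, p ≠ q ∧ ¬ G.Adj p q := by
    simpa [SimpleGraph.IsClique, Set.Pairwise] using hcl
  obtain ⟨x₁, hx₁⟩ := hM₁.2.1
  obtain ⟨x₂, hx₂⟩ := hM₂.2.1
  have hx₁₂ : x₁ ≠ x₂ := fun h => (hM₁.disjoint hM₂ h₁₂).notMem_of_mem_left hx₁ (h ▸ hx₂)
  have hU := hF.isUniversal_of_notMem_of_not_isClique hconn hM.1.1 hp hq hpq hnpq hx₁₂
    (fun m hm => h₁ m hm x₁ hx₁) (fun m hm => h₂ m hm x₂ hx₂)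
  exact hnp (hF.splitsIntoUniversalAndTwoCliques hx₁₂
    (hU x₁ fun h => G.loopless.irrefl _ (h₁ x₁ h x₁ hx₁))
    (hU x₂ fun h => G.loopless.irrefl _ (h₂ x₂ h x₂ hx₂)))

/-- Under the same hypotheses, every maximal strong module adjacent
(in the quotient graph) to more than two other maximal strong modules is a
single vertex. -/
theorem stmt_5 {V : Type*} [Fintype V] (G : SimpleGraph V) (hconn : G.Connected)
    (hF : FFree G) (hnc : ¬ G.IsClique (Set.univ : Set V))
    (hnp : ¬ ∃ U C1 C2 : Set V,
      Disjoint U C1 ∧ Disjoint U C2 ∧ Disjoint C1 C2 ∧ U ∪ C1 ∪ C2 = Set.univ ∧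
      (∀ u ∈ U, ∀ v : V, v ≠ u → G.Adj u v) ∧
      G.IsClique C1 ∧ G.IsClique C2 ∧ (∀ a ∈ C1, ∀ b ∈ C2, ¬ G.Adj a b)) :
    ∀ M : Set V, IsMaximalStrongModule G M →
      2 < {M' : Set V | IsMaximalStrongModule G M' ∧ M' ≠ M ∧
            ∀ a ∈ M, ∀ b ∈ M', G.Adj a b}.ncard →
      ∃ v : V, M = {v} :=
  stmt_5_general G hconn hF hnp
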